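/- arXiv:1703.02645 — 4 statements merged into one kernel-verified Lean document; each statement's English description precedes it below -/
import Mathlib

section
/- For any finite graph G with chromatic number χ ≥ 2, there exists a G-separating system of size ⌈log₂ χ⌉, and no G-separating system of size strictly smaller than ⌈log₂ χ⌉ exists. -/
/-!
A separating system `I : Fin m → Finset V` is the same thing as a proper colouring of `G` with
the `2 ^ m` colours `Fin m → Bool`: colour `v` by the vector of memberships `v ∈ I i`; an edge is
separated by some `I i` exactly when its endpoints get different vectors. Hence a separating
system of size `m` exists iff `χ ≤ 2 ^ m`, i.e. iff `⌈log₂ χ⌉ ≤ m`.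
-/

/-- A `G`-separating system: every edge is separated by some set. -/
def IsSepSys {V : Type*} (G : SimpleGraph V) {m : ℕ} (I : Fin m → Finset V) : Prop :=
  ∀ u v : V, G.Adj u v → ∃ i, (u ∈ I i ∧ v ∉ I i) ∨ (u ∉ I i ∧ v ∈ I i)

open SimpleGraph

section

variable {V : Type*} {G : SimpleGraph V} {m : ℕ}

namespace IsSepSys

theorem colorable {I : Fin m → Finset V} (hI : IsSepSys G I) : G.Colorable (2 ^ m) := by
  classical
  let C : G.Coloring (Fin m → Bool) :=
    Coloring.mk (fun v i => decide (v ∈ I i)) fun {u v} huv hcol => by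
      obtain ⟨i, hi⟩ := hI u v huv
      have := congrFun hcol i
      rcases hi with ⟨hu, hv⟩ | ⟨hu, hv⟩ <;> simp [hu, hv] at this
  simpa using C.colorable

end IsSepSys

theorem SimpleGraph.Coloring.isSepSys_bitClasses [Fintype V] (C : G.Coloring (Fin m → Bool)) :
    IsSepSys G fun i => Finset.univ.filter fun v => C v i = true := by
  intro u v huv
  by_contra! hsame
  refine C.valid huv (funext fun i => ?_)
  have := hsame i
  simp only [Finset.mem_filter, Finset.mem_univ, true_and] at this
  exact Bool.eq_iff_iff.mpr ⟨this.1, fun hv => by_contra fun hu => this.2 hu hv⟩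

theorem exists_isSepSys_iff_colorable [Fintype V] :
    (∃ I : Fin m → Finset V, IsSepSys G I) ↔ G.Colorable (2 ^ m) :=
  ⟨fun ⟨_, hI⟩ => hI.colorable, fun h =>
    ⟨_, (h.toColoring (by simp) : G.Coloring (Fin m → Bool)).isSepSys_bitClasses⟩⟩

end

theorem stmt_2_general {V : Type*} [Fintype V] (G : SimpleGraph V) (χ : ℕ)
    (hχ : G.chromaticNumber = (χ : ℕ∞)) :
    (∃ I : Fin (Nat.clog 2 χ) → Finset V, IsSepSys G I) ∧
    (∀ m : ℕ, ∀ I : Fin m → Finset V, IsSepSys G I → Nat.clog 2 χ ≤ m) := by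
  have colorable_iff (m : ℕ) : G.Colorable (2 ^ m) ↔ χ ≤ 2 ^ m := by
    rw [← chromaticNumber_le_iff_colorable, hχ, Nat.cast_le]
  refine ⟨exists_isSepSys_iff_colorable.mpr ?_, fun m I hI => ?_⟩
  · exact (colorable_iff _).mpr (Nat.le_pow_clog one_lt_two χ)
  · exact (Nat.clog_le_iff_le_pow one_lt_two).mpr ((colorable_iff m).mp hI.colorable)

/-- a graph with chromatic number χ ≥ 2 has a G-separating system
of size ⌈log₂ χ⌉ and none of strictly smaller size. -/
theorem stmt_2 {V : Type*} [Fintype V] (G : SimpleGraph V) (χ : ℕ)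
    (hχ : G.chromaticNumber = (χ : ℕ∞)) (h2 : 2 ≤ χ) :
    (∃ I : Fin (Nat.clog 2 χ) → Finset V, IsSepSys G I) ∧
    (∀ m : ℕ, ∀ I : Fin m → Finset V, IsSepSys G I → Nat.clog 2 χ ≤ m) :=
  stmt_2_general G χ hχ
end

section
/- Let G = (V,E) be a finite graph with chromatic number χ and nonnegative vertex weights w. There exists a G-separating system with total cost exactly Σ_{v∈V} w(v) − α_w(G), where α_w(G) is the maximum weight of an independent set; namely, take a maximum-weight independent set S, properly color the induced subgraph on V \ S with at most χ colors, and let each color class be one intervention set. Hence the minimum total cost over all G-separating systems equals Σ_v w(v) − α_w(G). -/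
/-- An independent set: pairwise nonadjacent vertices. -/
def IsIndep {V : Type*} (G : SimpleGraph V) (S : Finset V) : Prop :=
  ∀ u ∈ S, ∀ v ∈ S, ¬ G.Adj u v

/-- there is a G-separating system of total cost exactly
`Σ_v w(v) − α_w(G)` (with `S` a maximum-weight independent set), and this is the
minimum total cost over all G-separating systems. -/
theorem stmt_10 {V : Type*} [Fintype V] (G : SimpleGraph V) (χ : ℕ)
    (hχ : G.chromaticNumber = (χ : ℕ∞))
    (w : V → ℝ) (hw : ∀ v, 0 ≤ w v) (S : Finset V) (hS : IsIndep G S)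
    (hSmax : ∀ T : Finset V, IsIndep G T → ∑ v ∈ T, w v ≤ ∑ v ∈ S, w v) :
    (∃ (m : ℕ) (I : Fin m → Finset V), IsSepSys G I ∧
      ∑ i : Fin m, ∑ v ∈ I i, w v = (∑ v : V, w v) - ∑ v ∈ S, w v) ∧
    (∀ (m : ℕ) (I : Fin m → Finset V), IsSepSys G I →
      (∑ v : V, w v) - (∑ v ∈ S, w v) ≤ ∑ i : Fin m, ∑ v ∈ I i, w v) := by
  classical
  constructor
  · -- existence: singleton sets for each vertex outside S
    set T : Finset V := Finset.univ \ S with hT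
    refine ⟨T.card, fun i => {((T.equivFin.symm i : T) : V)}, ?_, ?_⟩
    · intro u v huv
      have hne : u ≠ v := G.ne_of_adj huv
      by_cases hu : u ∈ S
      · have hv : v ∉ S := fun hv => hS u hu v hv huv
        have hvT : v ∈ T := by simp [hT, hv]
        refine ⟨T.equivFin ⟨v, hvT⟩, Or.inr ?_⟩
        simp [hne]
      · have huT : u ∈ T := by simp [hT, hu]
        refine ⟨T.equivFin ⟨u, huT⟩, Or.inl ?_⟩
        simp [hne.symm]
    · have h1 : ∑ i : Fin T.card, ∑ v ∈ ({((T.equivFin.symm i : T) : V)} : Finset V), w v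
          = ∑ x : T, w x := by
        simp only [Finset.sum_singleton]
        exact Fintype.sum_equiv T.equivFin.symm _ _ (fun i => rfl)
      rw [h1]
      rw [Finset.sum_coe_sort T w]
      rw [hT, Finset.sum_sdiff_eq_sub (Finset.subset_univ S)]
  · -- minimality
    intro m I hsep
    set U : Finset V := Finset.univ.filter (fun v => ∀ i, v ∉ I i) with hU
    have hUindep : IsIndep G U := by
      intro u hu v hv huv
      obtain ⟨i, hi⟩ := hsep u v huv
      simp only [hU, Finset.mem_filter] at hu hv
      rcases hi with ⟨h1, _⟩ | ⟨_, h2⟩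
      · exact hu.2 i h1
      · exact hv.2 i h2
    have hUS : ∑ v ∈ U, w v ≤ ∑ v ∈ S, w v := hSmax U hUindep
    have key : ∑ v ∈ Finset.univ \ U, w v ≤ ∑ i : Fin m, ∑ v ∈ I i, w v := by
      have h2 : ∑ i : Fin m, ∑ v ∈ I i, w v
          = ∑ v : V, ∑ i ∈ Finset.univ.filter (fun i => v ∈ I i), w v := by
        rw [Finset.sum_comm' (t' := Finset.univ) (s' := fun v => Finset.univ.filter (fun i => v ∈ I i))]
        intro i v
        simp
      rw [h2]
      calc ∑ v ∈ Finset.univ \ U, w v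
          ≤ ∑ v ∈ Finset.univ \ U, ∑ i ∈ Finset.univ.filter (fun i => v ∈ I i), w v := by
            apply Finset.sum_le_sum
            intro v hv
            simp only [hU, Finset.mem_sdiff, Finset.mem_filter, Finset.mem_univ,
              true_and, not_forall, not_not] at hv
            obtain ⟨i, hi⟩ := hv
            have hmem : i ∈ Finset.univ.filter (fun i => v ∈ I i) := by simp [hi]
            exact Finset.single_le_sum (f := fun _ => w v) (fun j _ => hw v) hmem
        _ ≤ ∑ v : V, ∑ i ∈ Finset.univ.filter (fun i => v ∈ I i), w v := by
            apply Finset.sum_le_sum_of_subset_of_nonneg (Finset.sdiff_subset)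
            intro v _ _
            exact Finset.sum_nonneg fun j _ => hw v
    calc (∑ v : V, w v) - ∑ v ∈ S, w v
        ≤ (∑ v : V, w v) - ∑ v ∈ U, w v := by linarith
      _ = ∑ v ∈ Finset.univ \ U, w v := (Finset.sum_sdiff_eq_sub (Finset.subset_univ U)).symm
      _ ≤ ∑ i : Fin m, ∑ v ∈ I i, w v := key
end

section
/- Let G = (V,E) be a finite graph, m ≥ ⌈log₂ χ(G)⌉, and w : V → ℝ≥0. The minimum over all G-separating systems of size at most m of the total cost Σ_i Σ_{v∈I_i} w(v) equals the minimum over all proper colorings C : V → Fin 2^m and injective labelings ℓ : range(C) → {0,1}^m of Σ_{v∈V} w(v)·|ℓ(C(v))|₁, where |x|₁ is the Hamming weight of x. -/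
open scoped Classical

/-- Hamming weight of a binary vector. -/
def hamWt {m : ℕ} (x : Fin m → Bool) : ℕ :=
  (Finset.univ.filter fun i => x i = true).card

lemma cost_swap {V : Type*} [Fintype V] {m : ℕ} (I : Fin m → Finset V) (w : V → ℝ) :
    ∑ i : Fin m, ∑ v ∈ I i, w v
      = ∑ v : V, w v * ((Finset.univ.filter fun i => v ∈ I i).card : ℝ) := by
  have h1 : ∀ i : Fin m, ∑ v ∈ I i, w v = ∑ v : V, if v ∈ I i then w v else 0 := by
    intro i
    rw [Finset.sum_ite_mem, Finset.univ_inter]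
  simp_rw [h1]
  rw [Finset.sum_comm]
  refine Finset.sum_congr rfl fun v _ => ?_
  rw [← Finset.sum_filter, Finset.sum_const, nsmul_eq_mul, mul_comm]

/-- for `m ≥ ⌈log₂ χ(G)⌉`, the minimum total cost over
G-separating systems of size at most `m` equals the minimum over proper
colorings with at most `2^m` colors and injective labelings of the used colors
by binary vectors of length `m` of the labeled cost. -/
theorem stmt_12 {V : Type*} [Fintype V] (G : SimpleGraph V) (χ : ℕ)
    (hχ : G.chromaticNumber = (χ : ℕ∞)) (m : ℕ) (hm : Nat.clog 2 χ ≤ m)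
    (w : V → ℝ) (hw : ∀ v, 0 ≤ w v) :
    sInf {c : ℝ | ∃ I : Fin m → Finset V, IsSepSys G I ∧
        c = ∑ i : Fin m, ∑ v ∈ I i, w v} =
    sInf {c : ℝ | ∃ C : V → Fin (2 ^ m), (∀ u v : V, G.Adj u v → C u ≠ C v) ∧
        ∃ ℓ : Fin (2 ^ m) → (Fin m → Bool), Set.InjOn ℓ (Set.range C) ∧
          c = ∑ v : V, w v * (hamWt (ℓ (C v)) : ℝ)} := by
  apply congrArg sInf
  ext c
  constructor
  · rintro ⟨I, hI, rfl⟩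
    have e : (Fin m → Bool) ≃ Fin (2 ^ m) := Fintype.equivFinOfCardEq (by simp)
    refine ⟨fun v => e (fun i => decide (v ∈ I i)), ?_, e.symm,
      e.symm.injective.injOn, ?_⟩
    · intro u v huv h
      obtain ⟨i, hi⟩ := hI u v huv
      have h2 : (fun i => decide (u ∈ I i)) = (fun i => decide (v ∈ I i)) :=
        e.injective h
      have h3 := congrFun h2 i
      rcases hi with ⟨h4, h5⟩ | ⟨h4, h5⟩ <;> simp [h4, h5] at h3
    · simp only [Equiv.symm_apply_apply]
      rw [cost_swap]
      refine Finset.sum_congr rfl fun v _ => ?_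
      congr 1
      norm_cast
      unfold hamWt
      apply congrArg
      apply Finset.filter_congr
      intro i _
      simp
  · rintro ⟨C, hC, ℓ, hℓ, rfl⟩
    refine ⟨fun i => Finset.univ.filter (fun v => ℓ (C v) i = true), ?_, ?_⟩
    · intro u v huv
      have hne : ℓ (C u) ≠ ℓ (C v) := fun h =>
        hC u v huv (hℓ ⟨u, rfl⟩ ⟨v, rfl⟩ h)
      have : ∃ i, ℓ (C u) i ≠ ℓ (C v) i := by
        by_contra h
        push_neg at h
        exact hne (funext h)
      obtain ⟨i, hi⟩ := this
      refine ⟨i, ?_⟩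
      rcases hu : ℓ (C u) i <;> rcases hv : ℓ (C v) i <;>
        simp [hu, hv] at hi ⊢
    · rw [cost_swap]
      refine Finset.sum_congr rfl fun v _ => ?_
      congr 1
      norm_cast
      unfold hamWt
      apply congrArg
      apply Finset.filter_congr
      intro i _
      simp
end

section
/- There exists a graph G with chromatic number 3 and a minimum-size G-separating system (of size 2) that does not arise from any proper 3-coloring of G; i.e., the separating system assigns identical membership vectors to two vertices that receive different colors in every proper 3-coloring. -/
/-!
In the graph with triangle `0 1 2`, vertex `3` joined to `1, 2` and vertex `4` joined to `0, 2`,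
a proper 3-coloring must give `3` the color of `0` and `4` the color of `1`, so `3` and `4` get
different colors. Since `3` and `4` are not adjacent, the two sets `{0, 3, 4}` and `{1, 3, 4}`
nevertheless separate every edge while giving `3` and `4` the same membership vector.
-/

theorem Fin.three_eq_of_ne_of_ne {x y z w : Fin 3} (hxy : x ≠ y) (hxz : x ≠ z) (hyz : y ≠ z)
    (hwy : w ≠ y) (hwz : w ≠ z) : w = x := by
  omega

namespace SeparatingSystem

def witnessGraph : SimpleGraph (Fin 5) :=
  SimpleGraph.fromRel fun x y =>
    (x, y) ∈ ({(0, 1), (0, 2), (1, 2), (1, 3), (2, 3), (0, 4), (2, 4)} : Finset (Fin 5 × Fin 5))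

instance : DecidableRel witnessGraph.Adj :=
  fun _ _ => decidable_of_iff' _ (SimpleGraph.fromRel_adj _ _ _)

def witnessSepSys : Fin 2 → Finset (Fin 5) := ![{0, 3, 4}, {1, 3, 4}]

theorem witnessGraph_colorable_three : witnessGraph.Colorable 3 :=
  ⟨SimpleGraph.Coloring.mk ![0, 1, 2, 0, 1] (by decide)⟩

theorem witnessGraph_isClique_triangle : witnessGraph.IsClique ({0, 1, 2} : Finset (Fin 5)) := by
  decide

theorem witnessGraph_chromaticNumber : witnessGraph.chromaticNumber = 3 :=
  le_antisymm witnessGraph_colorable_three.chromaticNumber_le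
    witnessGraph_isClique_triangle.card_le_chromaticNumber

theorem isSepSys_witnessSepSys : IsSepSys witnessGraph witnessSepSys := by
  unfold IsSepSys
  decide

theorem witnessGraph_forced_colors (C : Fin 5 → Fin 3)
    (hC : ∀ a b, witnessGraph.Adj a b → C a ≠ C b) : C 3 = C 0 ∧ C 4 = C 1 := by
  exact ⟨Fin.three_eq_of_ne_of_ne (hC 0 1 (by decide)) (hC 0 2 (by decide))
      (hC 1 2 (by decide)) (hC 3 1 (by decide)) (hC 3 2 (by decide)),
    Fin.three_eq_of_ne_of_ne (hC 1 0 (by decide)) (hC 1 2 (by decide))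
      (hC 0 2 (by decide)) (hC 4 0 (by decide)) (hC 4 2 (by decide))⟩

end SeparatingSystem

open SeparatingSystem in
/-- there is a graph with chromatic number 3 and a minimum-size
G-separating system (of size 2 = ⌈log₂ 3⌉) giving two vertices identical
membership vectors although they receive different colors in every proper
3-coloring; hence this separating system arises from no proper 3-coloring. -/
theorem stmt_13 :
    ∃ (V : Type) (_ : Fintype V) (G : SimpleGraph V) (I : Fin 2 → Finset V)
      (u v : V),
      G.chromaticNumber = (3 : ℕ∞) ∧ IsSepSys G I ∧ u ≠ v ∧
      (∀ i : Fin 2, u ∈ I i ↔ v ∈ I i) ∧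
      (∀ C : V → Fin 3, (∀ a b : V, G.Adj a b → C a ≠ C b) → C u ≠ C v) := by
  refine ⟨Fin 5, inferInstance, witnessGraph, witnessSepSys, 3, 4, witnessGraph_chromaticNumber,
    isSepSys_witnessSepSys, by decide, by decide, fun C hC => ?_⟩
  obtain ⟨h3, h4⟩ := witnessGraph_forced_colors C hC
  rw [h3, h4]
  exact hC 0 1 (by decide)
end
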